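/- arXiv:0801.0385 — 4 statements merged into one kernel-verified Lean document; each statement's English description precedes it below -/
import Mathlib

section
/- The set CD(G) of convolution-dominated matrices on a discrete group G, with the norm ‖A‖₁ = ∑_z sup_{xy⁻¹=z}|A(x,y)|, matrix multiplication, and conjugate-transpose involution, is a Banach *-algebra continuously embedded in the bounded operators on ℓ²(G). -/
/-!
Everything rests on the entry bound `|A(x,y)| ≤ d_A(xy⁻¹)`, where `d_A(z) = sup_y |A(zy,y)|`
measures the `z`-th diagonal and `‖A‖₁ = ∑_z d_A(z)`. It bounds every row and column sum of `|A|`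
by `‖A‖₁`, so Schur's test (a weighted Cauchy–Schwarz inequality) bounds `A` on `ℓ²(G)`. It gives
`d_{AB}(w) ≤ ∑_u d_A(wu⁻¹) d_B(u)`, a convolution whose sum is `‖A‖₁ ‖B‖₁`. And it makes a
`‖·‖₁`-Cauchy sequence entrywise Cauchy; Fatou's lemma for sums puts the entrywise limit in `CD(G)`
and gives convergence in norm.
-/

open scoped ENNReal
open Filter

/-- The `CD(G)`-norm of a matrix: `‖A‖₁ = ∑_{z} sup_{x y⁻¹ = z} |A(x,y)|`. A matrix
belongs to `CD(G)` iff this is finite. -/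
noncomputable def CDnorm {G : Type*} [Group G] (A : G → G → ℂ) : ℝ≥0∞ :=
  ∑' z : G, ⨆ y : G, (‖A (z * y) y‖₊ : ℝ≥0∞)

noncomputable def matMul {G : Type*} [Group G] (A B : G → G → ℂ) : G → G → ℂ :=
  fun x y => ∑' z : G, A x z * B z y

noncomputable def matStar {G : Type*} [Group G] (A : G → G → ℂ) : G → G → ℂ :=
  fun x y => starRingEnd ℂ (A y x)

open scoped NNReal
open Topology

namespace ENNReal
variable {ι κ : Type*}

theorem tsum_sq_le_tsum_mul_tsum_of_sq_le_mul {r f g : ι → ℝ≥0} (h : ∀ i, r i ^ 2 ≤ f i * g i) :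
    (∑' i, (r i : ℝ≥0∞)) ^ 2 ≤ (∑' i, (f i : ℝ≥0∞)) * ∑' i, (g i : ℝ≥0∞) := by
  rw [ENNReal.tsum_eq_iSup_sum, ENNReal.iSup_pow]
  refine iSup_le fun s => ?_
  calc (∑ i ∈ s, (r i : ℝ≥0∞)) ^ 2 ≤ (∑ i ∈ s, (f i : ℝ≥0∞)) * ∑ i ∈ s, (g i : ℝ≥0∞) := by
        exact_mod_cast Finset.sum_sq_le_sum_mul_sum_of_sq_le_mul s (fun _ _ => bot_le)
          (fun _ _ => bot_le) fun i _ => h i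
    _ ≤ _ := by gcongr <;> exact ENNReal.sum_le_tsum s

theorem tsum_sq_tsum_mul_le_of_tsum_le (k : ι → κ → ℝ≥0) (c : κ → ℝ≥0) {R C : ℝ≥0∞}
    (hR : ∀ i, ∑' j, (k i j : ℝ≥0∞) ≤ R) (hC : ∀ j, ∑' i, (k i j : ℝ≥0∞) ≤ C) :
    ∑' i, (∑' j, (k i j : ℝ≥0∞) * c j) ^ 2 ≤ R * C * ∑' j, (c j : ℝ≥0∞) ^ 2 := by
  calc ∑' i, (∑' j, (k i j : ℝ≥0∞) * c j) ^ 2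
      ≤ ∑' i, (∑' j, (k i j : ℝ≥0∞)) * ∑' j, (k i j : ℝ≥0∞) * c j ^ 2 := by
        refine ENNReal.tsum_le_tsum fun i => ?_
        have := tsum_sq_le_tsum_mul_tsum_of_sq_le_mul (r := fun j => k i j * c j)
          (f := k i) (g := fun j => k i j * c j ^ 2) fun j => le_of_eq (by ring)
        simpa only [ENNReal.coe_mul, ENNReal.coe_pow] using this
    _ ≤ ∑' i, R * ∑' j, (k i j : ℝ≥0∞) * c j ^ 2 := by gcongr with i; exact hR i
    _ = R * ∑' j, (∑' i, (k i j : ℝ≥0∞)) * c j ^ 2 := by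
        rw [ENNReal.tsum_mul_left, ENNReal.tsum_comm]
        simp only [ENNReal.tsum_mul_right]
    _ ≤ R * ∑' j, C * c j ^ 2 := by gcongr with j; exact hC j
    _ = R * C * ∑' j, (c j : ℝ≥0∞) ^ 2 := by rw [ENNReal.tsum_mul_left, mul_assoc]

theorem tsum_liminf_le_liminf_tsum {β : Type*} (f : β → ι → ℝ≥0∞) (u : Filter β)
    [u.IsCountablyGenerated] :
    ∑' i, liminf (fun n => f n i) u ≤ liminf (fun n => ∑' i, f n i) u := by
  let : MeasurableSpace ι := ⊤
  have := MeasureTheory.lintegral_liminf_le (μ := MeasureTheory.Measure.count)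
    (u := u) (f := f) fun n s _ => MeasurableSpace.measurableSet_top
  simpa only [MeasureTheory.lintegral_count] using this

end ENNReal

namespace lp
variable {α : Type*} {E : α → Type*} [∀ i, NormedAddCommGroup (E i)]

theorem enorm_sq_eq_tsum (f : lp E 2) : ‖f‖ₑ ^ 2 = ∑' i, ‖f i‖ₑ ^ 2 := by
  have h2 : (0 : ℝ) < (2 : ℝ≥0∞).toReal := by norm_num
  have hs := (lp.memℓp f).summable h2
  have hnorm := lp.norm_rpow_eq_tsum h2 f
  simp only [ENNReal.toReal_ofNat, Real.rpow_two] at hs hnorm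
  rw [← ofReal_norm, ← ENNReal.ofReal_pow (norm_nonneg _), hnorm,
    ENNReal.ofReal_tsum_of_nonneg (fun i => by positivity) hs]
  simp only [ENNReal.ofReal_pow (norm_nonneg _), ofReal_norm]

end lp

theorem memℓp_two_of_tsum_enorm_sq_ne_top {α : Type*} {E : α → Type*}
    [∀ i, NormedAddCommGroup (E i)] {f : ∀ i, E i} (hf : ∑' i, ‖f i‖ₑ ^ 2 ≠ ⊤) :
    Memℓp f 2 := by
  refine memℓp_gen ?_
  have : Summable fun i => ‖f i‖₊ ^ 2 := by
    refine ENNReal.tsum_coe_ne_top_iff_summable.mp ?_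
    simpa only [ENNReal.coe_pow, enorm_eq_nnnorm] using hf
  simpa only [ENNReal.toReal_ofNat, Real.rpow_two, NNReal.coe_pow, coe_nnnorm] using
    NNReal.summable_coe.mpr this

section CD

variable {G : Type*} [Group G]

noncomputable def diagSup (A : G → G → ℂ) (z : G) : ℝ≥0∞ := ⨆ y : G, ‖A (z * y) y‖ₑ

theorem CDnorm_eq_tsum_diagSup (A : G → G → ℂ) : CDnorm A = ∑' z, diagSup A z := rfl

theorem enorm_le_diagSup (A : G → G → ℂ) (x y : G) : ‖A x y‖ₑ ≤ diagSup A (x * y⁻¹) :=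
  le_iSup_of_le y (by rw [inv_mul_cancel_right])

theorem tsum_diagSup_mul_right (A : G → G → ℂ) (u : G) :
    ∑' w, diagSup A (w * u) = CDnorm A :=
  (Equiv.mulRight u).tsum_eq (diagSup A)

theorem enorm_le_CDnorm (A : G → G → ℂ) (x y : G) : ‖A x y‖ₑ ≤ CDnorm A :=
  (enorm_le_diagSup A x y).trans (ENNReal.le_tsum _)

theorem tsum_enorm_row_le_CDnorm (A : G → G → ℂ) (x : G) : ∑' y, ‖A x y‖ₑ ≤ CDnorm A :=
  calc ∑' y, ‖A x y‖ₑ ≤ ∑' y, diagSup A (x * y⁻¹) := ENNReal.tsum_le_tsum (enorm_le_diagSup A x)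
    _ = CDnorm A := ((Equiv.inv G).trans (Equiv.mulLeft x)).tsum_eq (diagSup A)

theorem tsum_enorm_col_le_CDnorm (A : G → G → ℂ) (y : G) : ∑' x, ‖A x y‖ₑ ≤ CDnorm A :=
  (ENNReal.tsum_le_tsum fun x => enorm_le_diagSup A x y).trans_eq (tsum_diagSup_mul_right A y⁻¹)

theorem CDnorm_le_add_of_enorm_le {A B C : G → G → ℂ}
    (h : ∀ x y, ‖C x y‖ₑ ≤ ‖A x y‖ₑ + ‖B x y‖ₑ) : CDnorm C ≤ CDnorm A + CDnorm B := by
  rw [CDnorm_eq_tsum_diagSup, CDnorm_eq_tsum_diagSup, CDnorm_eq_tsum_diagSup, ← ENNReal.tsum_add]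
  exact ENNReal.tsum_le_tsum fun z => iSup_le fun y =>
    (h _ _).trans (add_le_add (le_iSup (fun y => ‖A (z * y) y‖ₑ) y)
      (le_iSup (fun y => ‖B (z * y) y‖ₑ) y))

theorem CDnorm_add_le (A B : G → G → ℂ) :
    CDnorm (fun x y => A x y + B x y) ≤ CDnorm A + CDnorm B :=
  CDnorm_le_add_of_enorm_le fun _ _ => enorm_add_le _ _

theorem CDnorm_const_mul (A : G → G → ℂ) (c : ℂ) :
    CDnorm (fun x y => c * A x y) = ‖c‖₊ * CDnorm A := by
  simp only [CDnorm, nnnorm_mul, ENNReal.coe_mul, ← ENNReal.mul_iSup, ENNReal.tsum_mul_left]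

theorem eq_zero_of_CDnorm_eq_zero {A : G → G → ℂ} (h : CDnorm A = 0) : A = fun _ _ => 0 := by
  funext x y
  simpa [h] using enorm_le_CDnorm A x y

theorem diagSup_matStar (A : G → G → ℂ) (z : G) : diagSup (matStar A) z = diagSup A z⁻¹ := by
  refine le_antisymm (iSup_le fun y => ?_) (iSup_le fun y => ?_)
  · exact le_iSup_of_le (z * y) (by simp [matStar])
  · exact le_iSup_of_le (z⁻¹ * y) (by simp [matStar])

theorem CDnorm_matStar (A : G → G → ℂ) : CDnorm (matStar A) = CDnorm A := by
  simp only [CDnorm_eq_tsum_diagSup, diagSup_matStar]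
  exact (Equiv.inv G).tsum_eq (diagSup A)

theorem matStar_matStar (A : G → G → ℂ) : matStar (matStar A) = A := by
  funext x y; simp [matStar]

theorem matStar_matMul (A B : G → G → ℂ) :
    matStar (matMul A B) = matMul (matStar B) (matStar A) := by
  funext x y
  simp only [matStar, matMul, Complex.conj_tsum, map_mul, mul_comm]

theorem diagSup_matMul_le (A B : G → G → ℂ) (w : G) :
    diagSup (matMul A B) w ≤ ∑' u, diagSup A (w * u⁻¹) * diagSup B u := by
  refine iSup_le fun y => ?_
  calc ‖matMul A B (w * y) y‖ₑ ≤ ∑' z, ‖A (w * y) z‖ₑ * ‖B z y‖ₑ := by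
        simpa only [matMul, enorm_mul] using
          enorm_tsum_le_tsum_enorm (f := fun z => A (w * y) z * B z y)
    _ ≤ ∑' z, diagSup A (w * y * z⁻¹) * diagSup B (z * y⁻¹) := by
        gcongr with z
        · exact enorm_le_diagSup A _ _
        · exact enorm_le_diagSup B _ _
    _ = ∑' u, diagSup A (w * u⁻¹) * diagSup B u := by
        rw [← (Equiv.mulRight y).tsum_eq]
        simp [mul_assoc]

theorem CDnorm_matMul_le (A B : G → G → ℂ) : CDnorm (matMul A B) ≤ CDnorm A * CDnorm B :=
  calc CDnorm (matMul A B) ≤ ∑' w, ∑' u, diagSup A (w * u⁻¹) * diagSup B u :=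
        ENNReal.tsum_le_tsum (diagSup_matMul_le A B)
    _ = CDnorm A * CDnorm B := by
        rw [ENNReal.tsum_comm, CDnorm_eq_tsum_diagSup B, ← ENNReal.tsum_mul_left]
        simp only [ENNReal.tsum_mul_right, tsum_diagSup_mul_right]

theorem CDnorm_le_liminf_of_tendsto {F : ℕ → G → G → ℂ} {L : G → G → ℂ}
    (h : ∀ x y, Tendsto (fun n => F n x y) atTop (𝓝 (L x y))) :
    CDnorm L ≤ liminf (fun n => CDnorm (F n)) atTop :=
  calc CDnorm L ≤ ∑' z, liminf (fun n => diagSup (F n) z) atTop :=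
        ENNReal.tsum_le_tsum fun z => iSup_le fun y => by
          change ‖L (z * y) y‖ₑ ≤ _
          rw [← ((h _ _).enorm).liminf_eq]
          exact liminf_le_liminf (.of_forall fun n => le_iSup (fun y => ‖F n (z * y) y‖ₑ) y)
    _ ≤ liminf (fun n => CDnorm (F n)) atTop :=
        ENNReal.tsum_liminf_le_liminf_tsum (fun n => diagSup (F n)) atTop

theorem exists_tendsto_CDnorm_sub_of_cauchy (F : ℕ → G → G → ℂ) (hF : ∀ n, CDnorm (F n) < ⊤)
    (hc : ∀ ε : ℝ≥0∞, 0 < ε → ∃ N, ∀ m n, N ≤ m → N ≤ n →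
      CDnorm (fun x y => F m x y - F n x y) < ε) :
    ∃ L : G → G → ℂ, CDnorm L < ⊤ ∧
      Tendsto (fun n => CDnorm (fun x y => F n x y - L x y)) atTop (𝓝 0) := by
  have hcauchy (x y : G) : CauchySeq fun n => F n x y := by
    refine EMetric.cauchySeq_iff.2 fun ε hε => ?_
    obtain ⟨N, hN⟩ := hc ε hε
    exact ⟨N, fun m hm n hn => by
      simpa only [edist_eq_enorm_sub] using (enorm_le_CDnorm _ x y).trans_lt (hN m n hm hn)⟩
  choose L hL using fun x y => cauchySeq_tendsto_of_complete (hcauchy x y)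
  have hclose (ε : ℝ≥0∞) (hε : 0 < ε) :
      ∃ N, ∀ m ≥ N, CDnorm (fun x y => F m x y - L x y) ≤ ε := by
    obtain ⟨N, hN⟩ := hc ε hε
    refine ⟨N, fun m hm => (CDnorm_le_liminf_of_tendsto fun x y =>
      tendsto_const_nhds.sub (hL x y)).trans ?_⟩
    exact liminf_le_of_frequently_le
      (Eventually.frequently (eventually_atTop.2 ⟨N, fun n hn => (hN m n hm hn).le⟩))
  refine ⟨L, ?_, ENNReal.tendsto_atTop_zero.2 hclose⟩
  obtain ⟨N, hN⟩ := hclose 1 one_pos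
  have hL_le : CDnorm L ≤ CDnorm (F N) + CDnorm (fun x y => F N x y - L x y) :=
    CDnorm_le_add_of_enorm_le fun x y => by
      simpa using enorm_sub_le (a := F N x y) (b := F N x y - L x y)
  exact hL_le.trans_lt (ENNReal.add_lt_top.2 ⟨hF N, (hN N le_rfl).trans_lt ENNReal.one_lt_top⟩)

theorem tsum_enorm_matVec_sq_le (A : G → G → ℂ) (c : G → ℂ) :
    ∑' x, ‖∑' y, A x y * c y‖ₑ ^ 2 ≤ CDnorm A ^ 2 * ∑' y, ‖c y‖ₑ ^ 2 :=
  calc ∑' x, ‖∑' y, A x y * c y‖ₑ ^ 2 ≤ ∑' x, (∑' y, ‖A x y‖ₑ * ‖c y‖ₑ) ^ 2 := by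
        gcongr with x
        simpa only [enorm_mul] using enorm_tsum_le_tsum_enorm (f := fun y => A x y * c y)
    _ ≤ CDnorm A * CDnorm A * ∑' y, ‖c y‖ₑ ^ 2 :=
        ENNReal.tsum_sq_tsum_mul_le_of_tsum_le (fun x y => ‖A x y‖₊) (fun y => ‖c y‖₊)
          (tsum_enorm_row_le_CDnorm A) (tsum_enorm_col_le_CDnorm A)
    _ = CDnorm A ^ 2 * ∑' y, ‖c y‖ₑ ^ 2 := by rw [sq]

theorem summable_mul_lp_of_CDnorm_ne_top {A : G → G → ℂ} (hA : CDnorm A ≠ ⊤)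
    (c : lp (fun _ : G => ℂ) 2) (x : G) : Summable fun y => A x y * c y := by
  have hrow : ∑' y, ‖A x y‖ₑ * ‖c y‖ₑ ≤ CDnorm A * ‖c‖ₑ :=
    calc ∑' y, ‖A x y‖ₑ * ‖c y‖ₑ ≤ ∑' y, ‖A x y‖ₑ * ‖c‖ₑ := by
          gcongr with y
          exact enorm_le_iff_norm_le.2 (lp.norm_apply_le_norm two_ne_zero c y)
      _ ≤ CDnorm A * ‖c‖ₑ := by
          rw [ENNReal.tsum_mul_right]
          gcongr
          exact tsum_enorm_row_le_CDnorm A x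
  refine Summable.of_nnnorm (ENNReal.tsum_coe_ne_top_iff_summable.1 ?_)
  simp only [nnnorm_mul, ENNReal.coe_mul]
  exact ne_top_of_le_ne_top (ENNReal.mul_ne_top hA enorm_ne_top) hrow

theorem memℓp_two_matVec {A : G → G → ℂ} (hA : CDnorm A ≠ ⊤) (c : lp (fun _ : G => ℂ) 2) :
    Memℓp (fun x => ∑' y, A x y * c y) 2 := by
  refine memℓp_two_of_tsum_enorm_sq_ne_top (ne_top_of_le_ne_top ?_ (tsum_enorm_matVec_sq_le A c))
  rw [← lp.enorm_sq_eq_tsum]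
  exact ENNReal.mul_ne_top (ENNReal.pow_ne_top hA) (ENNReal.pow_ne_top enorm_ne_top)

noncomputable def lpMatrixLinearMap (A : G → G → ℂ) (hA : CDnorm A ≠ ⊤) :
    lp (fun _ : G => ℂ) 2 →ₗ[ℂ] lp (fun _ : G => ℂ) 2 where
  toFun c := ⟨fun x => ∑' y, A x y * c y, memℓp_two_matVec hA c⟩
  map_add' c d := lp.ext <| funext fun x => by
    simp only [lp.coeFn_add, Pi.add_apply, mul_add]
    exact (summable_mul_lp_of_CDnorm_ne_top hA c x).tsum_add
      (summable_mul_lp_of_CDnorm_ne_top hA d x)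
  map_smul' k c := lp.ext <| funext fun x => by
    simp only [lp.coeFn_smul, Pi.smul_apply, smul_eq_mul, RingHom.id_apply, mul_left_comm _ k]
    exact tsum_mul_left

theorem enorm_lpMatrixLinearMap_le {A : G → G → ℂ} (hA : CDnorm A ≠ ⊤)
    (c : lp (fun _ : G => ℂ) 2) : ‖lpMatrixLinearMap A hA c‖ₑ ≤ CDnorm A * ‖c‖ₑ := by
  rw [← ENNReal.pow_le_pow_left_iff two_ne_zero, mul_pow, lp.enorm_sq_eq_tsum,
    lp.enorm_sq_eq_tsum]
  exact tsum_enorm_matVec_sq_le A c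

theorem exists_lp_clm_apply_eq_tsum_of_CDnorm_lt_top (A : G → G → ℂ) (hA : CDnorm A < ⊤) :
    ∃ T : lp (fun _ : G => ℂ) 2 →L[ℂ] lp (fun _ : G => ℂ) 2,
      (∀ (c : lp (fun _ : G => ℂ) 2) (x : G), T c x = ∑' y : G, A x y * c y) ∧
      (‖T‖₊ : ℝ≥0∞) ≤ CDnorm A := by
  have hbound (c : lp (fun _ : G => ℂ) 2) :
      ‖lpMatrixLinearMap A hA.ne c‖ ≤ (CDnorm A).toReal * ‖c‖ := by
    rw [← toReal_enorm, ← toReal_enorm, ← ENNReal.toReal_mul]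
    exact ENNReal.toReal_mono (ENNReal.mul_ne_top hA.ne enorm_ne_top)
      (enorm_lpMatrixLinearMap_le hA.ne c)
  refine ⟨(lpMatrixLinearMap A hA.ne).mkContinuous _ hbound, fun c x => rfl, ?_⟩
  have hnorm := ENNReal.ofReal_le_ofReal
    (LinearMap.mkContinuous_norm_le _ ENNReal.toReal_nonneg hbound)
  rwa [ofReal_norm, ENNReal.ofReal_toReal hA.ne] at hnorm

end CD

/-- `CD(G)` with the norm `‖A‖₁`, matrix multiplication and the
conjugate-transpose involution is a Banach `*`-algebra continuously embedded into
`B(ℓ²(G))`: the norm is subadditive, homogeneous and submultiplicative, the involution is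
an isometric conjugate-linear anti-automorphism, the norm is complete, and each
`A ∈ CD(G)` induces a bounded operator on `ℓ²(G)` with operator norm `≤ ‖A‖₁`. -/
theorem CD_is_Banach_star_algebra {G : Type*} [Group G] :
    -- norm axioms
    (∀ A B : G → G → ℂ, CDnorm (fun x y => A x y + B x y) ≤ CDnorm A + CDnorm B) ∧
    (∀ (A : G → G → ℂ) (c : ℂ), CDnorm (fun x y => c * A x y) = ‖c‖₊ * CDnorm A) ∧
    (∀ A : G → G → ℂ, CDnorm A = 0 → A = fun _ _ => 0) ∧
    -- submultiplicativity
    (∀ A B : G → G → ℂ, CDnorm A < ⊤ → CDnorm B < ⊤ →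
      CDnorm (matMul A B) ≤ CDnorm A * CDnorm B) ∧
    -- isometric involution, compatible with products
    (∀ A : G → G → ℂ, CDnorm (matStar A) = CDnorm A) ∧
    (∀ A : G → G → ℂ, matStar (matStar A) = A) ∧
    (∀ A B : G → G → ℂ, CDnorm A < ⊤ → CDnorm B < ⊤ →
      matStar (matMul A B) = matMul (matStar B) (matStar A)) ∧
    -- completeness of CD(G)
    (∀ F : ℕ → (G → G → ℂ), (∀ n, CDnorm (F n) < ⊤) →
      (∀ ε : ℝ≥0∞, 0 < ε → ∃ N, ∀ m n, N ≤ m → N ≤ n →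
        CDnorm (fun x y => F m x y - F n x y) < ε) →
      ∃ L : G → G → ℂ, CDnorm L < ⊤ ∧
        Tendsto (fun n => CDnorm (fun x y => F n x y - L x y)) atTop (nhds 0)) ∧
    -- continuous embedding into B(ℓ²(G))
    (∀ A : G → G → ℂ, CDnorm A < ⊤ →
      ∃ T : lp (fun _ : G => ℂ) 2 →L[ℂ] lp (fun _ : G => ℂ) 2,
        (∀ (c : lp (fun _ : G => ℂ) 2) (x : G), T c x = ∑' y : G, A x y * c y) ∧
        (‖T‖₊ : ℝ≥0∞) ≤ CDnorm A) :=
  ⟨CDnorm_add_le, CDnorm_const_mul, fun _ => eq_zero_of_CDnorm_eq_zero,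
    fun A B _ _ => CDnorm_matMul_le A B, CDnorm_matStar, matStar_matStar,
    fun A B _ _ => matStar_matMul A B, exists_tendsto_CDnorm_sub_of_cauchy,
    exists_lp_clm_apply_eq_tsum_of_CDnorm_lt_top⟩
end

section
/- The map R sending f = ∑_z m_z δ_z ∈ ℓ¹(G, ℓ^∞(G), T) to the operator ∑_z D^{m_z}_z is an isometric *-isomorphism from the twisted L¹-algebra ℓ¹(G, ℓ^∞(G), T) onto CD(G). -/
open scoped ENNReal

/-- Norm of the twisted algebra `ℓ¹(G, ℓ^∞(G), T)`: `‖f‖ = ∑_x ‖f(x)‖_∞`. -/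
noncomputable def L1norm {G : Type*} [Group G] (f : G → G → ℂ) : ℝ≥0∞ :=
  ∑' x : G, ⨆ z : G, (‖f x z‖₊ : ℝ≥0∞)

/-- Twisted convolution `(h ⋆ f)(x) = ∑_y T_y h(xy) · f(y⁻¹)`, i.e.
`(h ⋆ f)(x)(z) = ∑_y h(xy)(y⁻¹z) f(y⁻¹)(z)`. -/
noncomputable def tconv {G : Type*} [Group G] (h f : G → G → ℂ) : G → G → ℂ :=
  fun x z => ∑' y : G, h (x * y) (y⁻¹ * z) * f y⁻¹ z

/-- Twisted involution `f*(x) = conj (T_{x⁻¹} f(x⁻¹))`, i.e. `f*(x)(z) = conj (f(x⁻¹)(xz))`. -/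
noncomputable def tstar {G : Type*} [Group G] (f : G → G → ℂ) : G → G → ℂ :=
  fun x z => starRingEnd ℂ (f x⁻¹ (x * z))

/-- The canonical map `R : f = ∑_z m_z δ_z ↦ ∑_z D^{m_z}_z`; the resulting matrix has
entries `(Rf)(x,y) = f(xy⁻¹)(y)`. -/
def Rmat {G : Type*} [Group G] (f : G → G → ℂ) : G → G → ℂ :=
  fun x y => f (x * y⁻¹) y

/-!
`R` is the change of coordinates `(x, y) ↦ (x y⁻¹, y)`: the `x`-th component of `f` becomes the
`x`-th diagonal of the matrix. Its inverse reads the diagonals back off, the two norms agree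
diagonal by diagonal, and the twisted convolution becomes the matrix product after the bijective
substitution `z = w⁻¹ y` of the summation variable.
-/

section

variable {G : Type*} [Group G]

def Rinv (A : G → G → ℂ) : G → G → ℂ :=
  fun z y => A (z * y) y

theorem Rmat_Rinv (A : G → G → ℂ) : Rmat (Rinv A) = A := by
  funext x y
  simp [Rmat, Rinv]

theorem Rinv_Rmat (f : G → G → ℂ) : Rinv (Rmat f) = f := by
  funext z y
  simp [Rmat, Rinv]

theorem L1norm_Rinv (A : G → G → ℂ) : L1norm (Rinv A) = CDnorm A := rfl

theorem CDnorm_Rmat (f : G → G → ℂ) : CDnorm (Rmat f) = L1norm f := by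
  rw [← L1norm_Rinv, Rinv_Rmat]

theorem Rmat_tconv (h f : G → G → ℂ) : Rmat (tconv h f) = matMul (Rmat h) (Rmat f) := by
  funext x y
  simp only [Rmat, tconv, matMul]
  rw [← (Equiv.divLeft y).tsum_eq]
  refine tsum_congr fun z => ?_
  simp only [Equiv.divLeft_apply, div_eq_mul_inv]
  group

theorem Rmat_tstar (f : G → G → ℂ) : Rmat (tstar f) = matStar (Rmat f) := by
  funext x y
  simp only [Rmat, tstar, matStar]
  group

end

/-- The map `R` is an isometric `*`-isomorphism from the twisted
`L¹`-algebra `ℓ¹(G, ℓ^∞(G), T)` onto `CD(G)`: it is linear, isometric, multiplicative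
(`R(h ⋆ f) = R(h) R(f)`), `*`-preserving, and surjective onto `CD(G)`. -/
theorem R_isometric_star_isomorphism {G : Type*} [Group G] :
    (∀ (f h : G → G → ℂ) (c : ℂ),
      Rmat (fun x z => c * f x z + h x z) =
        fun x y => c * Rmat f x y + Rmat h x y) ∧
    (∀ f : G → G → ℂ, CDnorm (Rmat f) = L1norm f) ∧
    (∀ f h : G → G → ℂ, L1norm f < ⊤ → L1norm h < ⊤ →
      Rmat (tconv h f) = matMul (Rmat h) (Rmat f)) ∧
    (∀ f : G → G → ℂ, Rmat (tstar f) = matStar (Rmat f)) ∧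
    (∀ A : G → G → ℂ, CDnorm A < ⊤ →
      ∃ f : G → G → ℂ, L1norm f < ⊤ ∧ Rmat f = A) :=
  ⟨fun _ _ _ => rfl, CDnorm_Rmat, fun f h _ _ => Rmat_tconv h f, Rmat_tstar,
    fun A hA => ⟨Rinv A, (L1norm_Rinv A).trans_lt hA, Rmat_Rinv A⟩⟩
end

section
/- The map Q : f = ∑_v δ_v ⊗ m_v ↦ ∑_v δ_v ⊗ D^{m_v}_v is an isometric *-homomorphism from the twisted L¹-algebra ℓ¹(G, ℓ^∞(G), T) into the projective tensor product ℓ¹(G) ⊗̂ B(ℓ²(G)), where ℓ¹(G) carries convolution. -/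
/-!
Every operator involved is a weighted translation `D^m_v ξ (x) = m(v⁻¹x) ξ(v⁻¹x)`. Testing on
unit vectors `δ_z` and bounding the `ℓ²` sum termwise gives `‖D^m_v‖ = ‖m‖_∞`, and summing over
`v` gives the isometry. Products and adjoints stay in this class:
`D^n_u D^m_v = D^{n(v ·) m}_{uv}` and `(D^m_{v⁻¹})* = D^{conj m(v ·)}_v`. Summing the products
over `u`, which converges in norm because `‖f‖, ‖h‖ < ∞`, reproduces the twisted convolution, and
the adjoint formula is the twisted involution.
-/

open scoped ENNReal

open scoped lp ComplexConjugate NNReal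

/-- `A` is the operator `D^m_v` of the paper, with matrix `m(y) δ_v(x y⁻¹)`. -/
def IsSideDiagonal {𝕜 G : Type*} [RCLike 𝕜] [Group G] (v : G) (m : G → 𝕜)
    (A : ℓ²(G, 𝕜) →L[𝕜] ℓ²(G, 𝕜)) : Prop :=
  ∀ ξ x, A ξ x = m (v⁻¹ * x) * ξ (v⁻¹ * x)

theorem summable_comp_of_summable_norm {𝕜 ι E F H : Type*} [NontriviallyNormedField 𝕜]
    [NormedAddCommGroup E] [NormedSpace 𝕜 E] [NormedAddCommGroup F] [NormedSpace 𝕜 F]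
    [NormedAddCommGroup H] [NormedSpace 𝕜 H] [CompleteSpace H]
    {S : ι → F →L[𝕜] H} {T : ι → E →L[𝕜] F} {C : ℝ}
    (hS : Summable fun i => ‖S i‖) (hT : ∀ i, ‖T i‖ ≤ C) :
    Summable fun i => (S i).comp (T i) :=
  .of_norm_bounded (hS.mul_right C) fun i =>
    ((S i).opNorm_comp_le (T i)).trans (mul_le_mul_of_nonneg_left (hT i) (norm_nonneg _))

namespace IsSideDiagonal

variable {𝕜 G : Type*} [RCLike 𝕜] [Group G] {u v : G} {m n : G → 𝕜}
  {A B : ℓ²(G, 𝕜) →L[𝕜] ℓ²(G, 𝕜)}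

theorem unique (hA : IsSideDiagonal v m A) (hB : IsSideDiagonal v m B) : A = B :=
  ContinuousLinearMap.ext fun ξ => lp.ext <| funext fun x => by rw [hA, hB]

theorem norm_le (hA : IsSideDiagonal v m A) {C : ℝ} (hC : 0 ≤ C) (hm : ∀ z, ‖m z‖ ≤ C) :
    ‖A‖ ≤ C := by
  refine A.opNorm_le_bound hC fun ξ => ?_
  set p := (2 : ℝ≥0∞).toReal
  have hp : 0 < p := by norm_num [p]
  have hξ : Summable fun x => ‖ξ (v⁻¹ * x)‖ ^ p :=
    (Equiv.mulLeft v⁻¹).summable_iff.mpr ((lp.memℓp ξ).summable hp)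
  refine lp.norm_le_of_tsum_le hp (mul_nonneg hC (norm_nonneg _)) ?_
  calc ∑' x, ‖A ξ x‖ ^ p ≤ ∑' x, C ^ p * ‖ξ (v⁻¹ * x)‖ ^ p := by
        refine Summable.tsum_le_tsum (fun x => ?_) ((lp.memℓp (A ξ)).summable hp)
          (hξ.mul_left _)
        rw [hA, norm_mul, Real.mul_rpow (norm_nonneg _) (norm_nonneg _)]
        gcongr
        exact hm _
    _ = C ^ p * ∑' y, ‖ξ y‖ ^ p := by
        rw [tsum_mul_left]
        exact congrArg _ ((Equiv.mulLeft v⁻¹).tsum_eq fun y => ‖ξ y‖ ^ p)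
    _ = (C * ‖ξ‖) ^ p := by rw [Real.mul_rpow hC (norm_nonneg _), lp.norm_rpow_eq_tsum hp]

theorem norm_apply_le (hA : IsSideDiagonal v m A) (z : G) : ‖m z‖ ≤ ‖A‖ := by
  classical
  let δ : ℓ²(G, 𝕜) := lp.single 2 z 1
  have hδ : ‖δ‖ = 1 := by simp [δ]
  calc ‖m z‖ = ‖A δ (v * z)‖ := by simp [hA δ, δ]
    _ ≤ ‖A δ‖ := lp.norm_apply_le_norm (by norm_num) _ _
    _ ≤ ‖A‖ := by simpa [hδ] using A.le_opNorm δ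

theorem enorm_eq (hA : IsSideDiagonal v m A) : ‖A‖ₑ = ⨆ z, ‖m z‖ₑ := by
  refine le_antisymm ?_ (iSup_le fun z => ?_)
  rcases eq_top_or_lt_top (⨆ z, ‖m z‖ₑ) with htop | hfin
  · simp [htop]
  · lift (⨆ z, ‖m z‖ₑ) to ℝ≥0 using hfin.ne with c hc
    have hm : ∀ z, ‖m z‖ ≤ c := fun z => by
      have := le_iSup (fun z => ‖m z‖ₑ) z
      rw [← hc] at this
      exact_mod_cast this
    rw [← ofReal_norm, ← ENNReal.ofReal_coe_nnreal]
    exact ENNReal.ofReal_le_ofReal (hA.norm_le c.coe_nonneg hm)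
  · rw [← ofReal_norm, ← ofReal_norm]
    exact ENNReal.ofReal_le_ofReal (hA.norm_apply_le z)

theorem comp (hB : IsSideDiagonal u n B) (hA : IsSideDiagonal v m A) :
    IsSideDiagonal (u * v) (fun y => n (v * y) * m y) (B.comp A) := by
  intro ξ x
  rw [ContinuousLinearMap.comp_apply, hB, hA]
  simp only [mul_inv_rev, mul_assoc, mul_inv_cancel_left]

theorem tsum {ι : Type*} {A : ι → ℓ²(G, 𝕜) →L[𝕜] ℓ²(G, 𝕜)} {m : ι → G → 𝕜}
    (hA : ∀ i, IsSideDiagonal v (m i) (A i)) (hs : Summable A) :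
    IsSideDiagonal v (fun y => ∑' i, m i y) (∑' i, A i) := by
  intro ξ x
  have hev : (∑' i, A i) ξ x = ∑' i, A i ξ x :=
    ((lp.evalCLM 𝕜 (fun _ : G => 𝕜) 2 x).comp (ContinuousLinearMap.apply 𝕜 _ ξ)).map_tsum hs
  simp only [hev, hA _ _, tsum_mul_right]

theorem eq_adjoint (hA : IsSideDiagonal v⁻¹ m A)
    (hB : IsSideDiagonal v (fun y => conj (m (v * y))) B) : B = ContinuousLinearMap.adjoint A := by
  refine (ContinuousLinearMap.eq_adjoint_iff B A).mpr fun ξ η => ?_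
  simp only [lp.inner_eq_tsum, RCLike.inner_apply', hA _ _, hB _ _, inv_inv, mul_inv_cancel_left]
  refine ((Equiv.mulLeft v).tsum_eq _).symm.trans (tsum_congr fun x => ?_)
  simp only [Equiv.coe_mulLeft, inv_mul_cancel_left, map_mul, RCLike.conj_conj]
  ring

end IsSideDiagonal

theorem tconv_eq_tsum {G : Type*} [Group G] (h f : G → G → ℂ) (v : G) :
    tconv h f v = fun y => ∑' z, h z (z⁻¹ * (v * y)) * f (z⁻¹ * v) y := by
  ext y
  rw [tconv, ← (Equiv.mulLeft v⁻¹).tsum_eq]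
  simp only [Equiv.coe_mulLeft, mul_inv_rev, inv_inv, mul_assoc, mul_inv_cancel_left]

/-- The map `Q : ∑_v δ_v ⊗ m_v ↦ ∑_v δ_v ⊗ D^{m_v}_v` is an isometric
`*`-homomorphism from the twisted algebra `ℓ¹(G, ℓ^∞(G), T)` into the projective tensor
product `ℓ¹(G) ⊗̂ B(ℓ²(G)) ≅ ℓ¹(G, B(ℓ²(G)))` with convolution multiplication:
if `T v`, `S v`, `W v`, `V v` are the side-diagonal operators `D^{f(v)}_v`, `D^{h(v)}_v`,
`D^{(h⋆f)(v)}_v`, `D^{f*(v)}_v` on `ℓ²(G)`, then `∑_v ‖T v‖ = ‖f‖` (isometry),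
`W v = ∑_z S z ∘ T(z⁻¹ v)` (`Q(h ⋆ f) = Q(h) ∗ Q(f)`, the `ℓ¹(G, B)`-convolution),
and `V v = (T v⁻¹)*` (`Q(f*) = Q(f)*`). -/
theorem Q_isometric_star_homomorphism {G : Type*} [Group G]
    (f h : G → G → ℂ) (hf : L1norm f < ⊤) (hh : L1norm h < ⊤)
    (T S W V : G → (lp (fun _ : G => ℂ) 2 →L[ℂ] lp (fun _ : G => ℂ) 2))
    (hT : ∀ (v : G) (ξ : lp (fun _ : G => ℂ) 2) (x : G),
      T v ξ x = f v (v⁻¹ * x) * ξ (v⁻¹ * x))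
    (hS : ∀ (v : G) (ξ : lp (fun _ : G => ℂ) 2) (x : G),
      S v ξ x = h v (v⁻¹ * x) * ξ (v⁻¹ * x))
    (hW : ∀ (v : G) (ξ : lp (fun _ : G => ℂ) 2) (x : G),
      W v ξ x = tconv h f v (v⁻¹ * x) * ξ (v⁻¹ * x))
    (hV : ∀ (v : G) (ξ : lp (fun _ : G => ℂ) 2) (x : G),
      V v ξ x = tstar f v (v⁻¹ * x) * ξ (v⁻¹ * x)) :
    (∑' v : G, (‖T v‖₊ : ℝ≥0∞)) = L1norm f ∧
    (∀ v : G, W v = ∑' z : G, (S z).comp (T (z⁻¹ * v))) ∧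
    (∀ v : G, V v = ContinuousLinearMap.adjoint (T v⁻¹)) := by
  have hT' : ∀ v, IsSideDiagonal v (f v) (T v) := hT
  have hS' : ∀ v, IsSideDiagonal v (h v) (S v) := hS
  have hTnorm : ∑' v, ‖T v‖ₑ = L1norm f := tsum_congr fun v => (hT' v).enorm_eq
  have hSnorm : ∑' v, ‖S v‖ₑ = L1norm h := tsum_congr fun v => (hS' v).enorm_eq
  refine ⟨hTnorm, fun v => ?_, fun v => (hT' v⁻¹).eq_adjoint (hV v)⟩
  have hTs := tsum_enorm_ne_top_iff_summable_norm.mp (hTnorm ▸ hf.ne)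
  have hSs := tsum_enorm_ne_top_iff_summable_norm.mp (hSnorm ▸ hh.ne)
  have hsum : Summable fun z => (S z).comp (T (z⁻¹ * v)) :=
    summable_comp_of_summable_norm hSs fun z => hTs.le_tsum _ fun _ _ => norm_nonneg _
  have hterm : ∀ z, IsSideDiagonal v (fun y => h z (z⁻¹ * (v * y)) * f (z⁻¹ * v) y)
      ((S z).comp (T (z⁻¹ * v))) := fun z => by
    simpa only [mul_inv_cancel_left, mul_assoc] using (hS' z).comp (hT' (z⁻¹ * v))
  refine IsSideDiagonal.unique (hW v) ?_
  rw [tconv_eq_tsum]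
  exact IsSideDiagonal.tsum hterm hsum
end

section
/- The unitary operator S on ℓ²(G × G) defined by (Sξ)(x,z) = ξ(xz, z) intertwines the amplified canonical representation R^ω and the D-regular representation λ^D of the twisted L¹-algebra: λ^D(f) ∘ S = S ∘ R^ω(f) for all f ∈ ℓ¹(G, ℓ^∞(G), T). Consequently ‖λ^D(f)‖ = ‖R(f)‖ for all f. -/
open scoped ENNReal

/-!
Slicing `ℓ²(G × G)` along the second coordinate, `λ^D(f)` acts on the fibre `z` of
`S⁻¹ξ` as `R(f)`, up to the right translation `x ↦ xz`, which is an isometry of `ℓ²(G)`.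
Since `‖ξ‖² = ∑_z ‖ξ(·, z)‖²`, this gives `‖λ^D(f)‖ ≤ ‖R(f)‖`. Conversely `λ^D(f)` maps
`c ⊗ δ₁` to `R(f)c ⊗ δ₁`, so `‖R(f)‖ ≤ ‖λ^D(f)‖`.
-/

theorem memℓp_two_iff {ι E : Type*} [NormedAddCommGroup E] {g : ι → E} :
    Memℓp g 2 ↔ Summable fun i => ‖g i‖ ^ 2 := by
  simpa using memℓp_gen_iff (E := fun _ : ι => E) (p := 2) (by norm_num) (f := g)

theorem Memℓp.comp_injective {ι κ E : Type*} [NormedAddCommGroup E] {p : ℝ≥0∞}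
    (hp : 0 < p.toReal) {g : κ → E} (hg : Memℓp g p) {e : ι → κ} (he : Function.Injective e) :
    Memℓp (g ∘ e) p :=
  memℓp_gen <| ((memℓp_gen_iff hp).1 hg).comp_injective he

namespace lp

variable {ι κ E : Type*} [NormedAddCommGroup E]

theorem norm_sq_eq_tsum (ξ : lp (fun _ : ι => E) 2) : ‖ξ‖ ^ 2 = ∑' i, ‖ξ i‖ ^ 2 := by
  simpa using norm_rpow_eq_tsum (p := 2) (by norm_num) ξ

theorem summable_tsum_fiber_norm_sq (ξ : lp (fun _ : ι × κ => E) 2) :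
    Summable fun z => ∑' x, ‖ξ (x, z)‖ ^ 2 :=
  (memℓp_two_iff.1 ξ.2).prod_symm.prod

theorem norm_sq_eq_tsum_tsum_fiber (ξ : lp (fun _ : ι × κ => E) 2) :
    ‖ξ‖ ^ 2 = ∑' z, ∑' x, ‖ξ (x, z)‖ ^ 2 := by
  have hξ := memℓp_two_iff.1 ξ.2
  rw [norm_sq_eq_tsum, hξ.tsum_prod]
  exact (Summable.tsum_comm (f := fun x z => ‖ξ (x, z)‖ ^ 2) hξ).symm

theorem norm_le_of_forall_fiber_le {ξ η : lp (fun _ : ι × κ => E) 2} {C : ℝ} (hC : 0 ≤ C)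
    (h : ∀ z, ∑' x, ‖η (x, z)‖ ^ 2 ≤ C ^ 2 * ∑' x, ‖ξ (x, z)‖ ^ 2) : ‖η‖ ≤ C * ‖ξ‖ := by
  refine le_of_pow_le_pow_left₀ two_ne_zero (by positivity) ?_
  rw [mul_pow, norm_sq_eq_tsum_tsum_fiber, norm_sq_eq_tsum_tsum_fiber, ← tsum_mul_left]
  exact (summable_tsum_fiber_norm_sq η).tsum_le_tsum h
    ((summable_tsum_fiber_norm_sq ξ).mul_left _)

section FiberEmbedding

variable [DecidableEq κ]

theorem _root_.Memℓp.ite_fiber {c : ι → E} (hc : Memℓp c 2) (z₀ : κ) :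
    Memℓp (fun p : ι × κ => if p.2 = z₀ then c p.1 else 0) 2 := by
  rw [memℓp_two_iff] at hc ⊢
  have hinj : Function.Injective fun x : ι => (x, z₀) := fun _ _ h => congrArg Prod.fst h
  refine (hinj.summable_iff ?_).1 (by simpa [Function.comp_def] using hc)
  rintro ⟨x, z⟩ hp
  have hz : z ≠ z₀ := fun hz => hp ⟨x, by rw [hz]⟩
  simp [hz]

/-- `c ⊗ δ_{z₀}`. -/
def fiberEmbedding (z₀ : κ) (c : lp (fun _ : ι => E) 2) : lp (fun _ : ι × κ => E) 2 :=
  ⟨fun p => if p.2 = z₀ then c p.1 else 0, c.2.ite_fiber z₀⟩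

@[simp]
theorem fiberEmbedding_apply (z₀ : κ) (c : lp (fun _ : ι => E) 2) (x : ι) (z : κ) :
    fiberEmbedding z₀ c (x, z) = if z = z₀ then c x else 0 :=
  rfl

theorem norm_fiberEmbedding (z₀ : κ) (c : lp (fun _ : ι => E) 2) :
    ‖fiberEmbedding z₀ c‖ = ‖c‖ := by
  have hfiber : ∀ z, ∑' x, ‖fiberEmbedding z₀ c (x, z)‖ ^ 2 =
      if z = z₀ then ∑' x, ‖c x‖ ^ 2 else 0 := fun z => by
    split_ifs with hz <;> simp [hz]
  refine (pow_left_inj₀ (norm_nonneg _) (norm_nonneg _) two_ne_zero).1 ?_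
  rw [norm_sq_eq_tsum_tsum_fiber, norm_sq_eq_tsum c, tsum_congr hfiber, tsum_ite_eq]

theorem norm_le_of_map_fiberEmbedding {𝕜 : Type*} [NontriviallyNormedField 𝕜]
    [NormedSpace 𝕜 E] (z₀ : κ) (T : lp (fun _ : ι × κ => E) 2 →L[𝕜] lp (fun _ : ι × κ => E) 2)
    (A : lp (fun _ : ι => E) 2 →L[𝕜] lp (fun _ : ι => E) 2)
    (h : ∀ c, T (fiberEmbedding z₀ c) = fiberEmbedding z₀ (A c)) : ‖A‖ ≤ ‖T‖ :=
  A.opNorm_le_bound (norm_nonneg T) fun c => by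
    simpa only [h, norm_fiberEmbedding] using T.le_opNorm (fiberEmbedding z₀ c)

end FiberEmbedding

end lp

namespace lp

variable {G E : Type*} [Group G] [NormedAddCommGroup E]

/-- The fibre over `z` of `S⁻¹ξ`, where `(Sξ)(x, z) = ξ(xz, z)`. -/
def shearedFiber (ξ : lp (fun _ : G × G => E) 2) (z : G) : lp (fun _ : G => E) 2 :=
  ⟨fun u => ξ (u * z⁻¹, z), ξ.2.comp_injective (by norm_num) (e := fun u => (u * z⁻¹, z))
    fun _ _ h => by simpa using congrArg Prod.fst h⟩

@[simp]
theorem shearedFiber_apply (ξ : lp (fun _ : G × G => E) 2) (z u : G) :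
    shearedFiber ξ z u = ξ (u * z⁻¹, z) :=
  rfl

theorem norm_sq_shearedFiber (ξ : lp (fun _ : G × G => E) 2) (z : G) :
    ‖shearedFiber ξ z‖ ^ 2 = ∑' x, ‖ξ (x, z)‖ ^ 2 := by
  rw [norm_sq_eq_tsum]
  exact (Equiv.mulRight z⁻¹).tsum_eq fun x => ‖ξ (x, z)‖ ^ 2

theorem norm_le_of_apply_eq_shearedFiber {𝕜 : Type*} [NontriviallyNormedField 𝕜]
    [NormedSpace 𝕜 E] (T : lp (fun _ : G × G => E) 2 →L[𝕜] lp (fun _ : G × G => E) 2)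
    (A : lp (fun _ : G => E) 2 →L[𝕜] lp (fun _ : G => E) 2)
    (h : ∀ ξ x z, T ξ (x, z) = A (shearedFiber ξ z) (x * z)) : ‖T‖ ≤ ‖A‖ := by
  refine T.opNorm_le_bound (norm_nonneg A) fun ξ =>
    norm_le_of_forall_fiber_le (norm_nonneg A) fun z => ?_
  calc ∑' x, ‖T ξ (x, z)‖ ^ 2 = ∑' x, ‖A (shearedFiber ξ z) (x * z)‖ ^ 2 := by simp only [h]
    _ = ‖A (shearedFiber ξ z)‖ ^ 2 := by
      rw [norm_sq_eq_tsum]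
      exact (Equiv.mulRight z).tsum_eq fun x => ‖A (shearedFiber ξ z) x‖ ^ 2
    _ ≤ (‖A‖ * ‖shearedFiber ξ z‖) ^ 2 := by gcongr; exact A.le_opNorm _
    _ = ‖A‖ ^ 2 * ∑' x, ‖ξ (x, z)‖ ^ 2 := by rw [mul_pow, norm_sq_shearedFiber]

end lp

def shearEquiv (G : Type*) [Group G] : G × G ≃ G × G where
  toFun p := (p.1 * p.2, p.2)
  invFun p := (p.1 * p.2⁻¹, p.2)
  left_inv p := by simp
  right_inv p := by simp

section TwistedRepresentations

variable {G : Type*} [Group G] {f : G → G → ℂ}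
  {TD : lp (fun _ : G × G => ℂ) 2 →L[ℂ] lp (fun _ : G × G => ℂ) 2}
  {TR : lp (fun _ : G => ℂ) 2 →L[ℂ] lp (fun _ : G => ℂ) 2}

theorem regularD_apply_eq_canonical_shearedFiber
    (hTD : ∀ (ξ : lp (fun _ : G × G => ℂ) 2) (x z : G),
      TD ξ (x, z) = ∑' y : G, f (x * y) (y⁻¹ * z) * ξ (y⁻¹, z))
    (hTR : ∀ (c : lp (fun _ : G => ℂ) 2) (x : G), TR c x = ∑' y : G, f (x * y⁻¹) y * c y)
    (ξ : lp (fun _ : G × G => ℂ) 2) (x z : G) :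
    TD ξ (x, z) = TR (lp.shearedFiber ξ z) (x * z) := by
  rw [hTD, hTR, eq_comm, ← ((Equiv.inv G).trans (Equiv.mulRight z)).tsum_eq]
  simp [mul_assoc]

theorem regularD_fiberEmbedding_one [DecidableEq G]
    (hTD : ∀ (ξ : lp (fun _ : G × G => ℂ) 2) (x z : G),
      TD ξ (x, z) = ∑' y : G, f (x * y) (y⁻¹ * z) * ξ (y⁻¹, z))
    (hTR : ∀ (c : lp (fun _ : G => ℂ) 2) (x : G), TR c x = ∑' y : G, f (x * y⁻¹) y * c y)
    (c : lp (fun _ : G => ℂ) 2) :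
    TD (lp.fiberEmbedding 1 c) = lp.fiberEmbedding 1 (TR c) := by
  ext ⟨x, z⟩
  rw [hTD, lp.fiberEmbedding_apply]
  split_ifs with hz
  · rw [hTR, ← (Equiv.inv G).tsum_eq]
    simp [hz]
  · simp [hz]

end TwistedRepresentations

theorem S_intertwines_and_norms_agree_general {G : Type*} [Group G]
    (f : G → G → ℂ)
    (TD : lp (fun _ : G × G => ℂ) 2 →L[ℂ] lp (fun _ : G × G => ℂ) 2)
    (hTD : ∀ (ξ : lp (fun _ : G × G => ℂ) 2) (x z : G),
      TD ξ (x, z) = ∑' y : G, f (x * y) (y⁻¹ * z) * ξ (y⁻¹, z))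
    (TR : lp (fun _ : G => ℂ) 2 →L[ℂ] lp (fun _ : G => ℂ) 2)
    (hTR : ∀ (c : lp (fun _ : G => ℂ) 2) (x : G),
      TR c x = ∑' y : G, f (x * y⁻¹) y * c y) :
    -- the intertwining relation λ^D(f) ∘ S = S ∘ R^ω(f), pointwise on functions
    (∀ (ξ : G × G → ℂ) (x z : G),
      (∑' y : G, f (x * y) (y⁻¹ * z) * ξ (y⁻¹ * z, z))
        = ∑' y : G, f y (y⁻¹ * (x * z)) * ξ (y⁻¹ * (x * z), z)) ∧
    -- S is a bijective isometry of ℓ²(G × G)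
    Function.Bijective (fun p : G × G => (p.1 * p.2, p.2)) ∧
    (∀ ξ : G × G → ℂ, ∑' p : G × G, ‖ξ (p.1 * p.2, p.2)‖ ^ 2 = ∑' p : G × G, ‖ξ p‖ ^ 2) ∧
    -- consequently the D-regular and canonical representations have equal norms
    ‖TD‖ = ‖TR‖ := by
  classical
  refine ⟨fun ξ x z => ?_, (shearEquiv G).bijective,
    fun ξ => (shearEquiv G).tsum_eq fun p => ‖ξ p‖ ^ 2, ?_⟩
  · rw [← (Equiv.mulLeft x).tsum_eq fun y => f y (y⁻¹ * (x * z)) * ξ (y⁻¹ * (x * z), z)]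
    simp [mul_assoc]
  · exact le_antisymm
      (lp.norm_le_of_apply_eq_shearedFiber TD TR
        (regularD_apply_eq_canonical_shearedFiber hTD hTR))
      (lp.norm_le_of_map_fiberEmbedding 1 TD TR (regularD_fiberEmbedding_one hTD hTR))

/-- The unitary operator `S` on `ℓ²(G × G)`, `(Sξ)(x,z) = ξ(xz, z)`,
intertwines the amplified canonical representation `R^ω`,
`(R^ω(f)ξ)(x,z) = ∑_y f(y)(y⁻¹x) ξ(y⁻¹x, z)`, and the `D`-regular representation
`(λ^D(f)ξ)(x,z) = ∑_y (T_y f(xy))(z) ξ(y⁻¹, z)`: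
`λ^D(f) ∘ S = S ∘ R^ω(f)`; `S` is a bijective isometry of `ℓ²(G×G)`; consequently
`‖λ^D(f)‖ = ‖R(f)‖`, where `R(f)` is the canonical representation on `ℓ²(G)`,
`(R(f)c)(x) = ∑_y f(xy⁻¹)(y) c(y)`. -/
theorem S_intertwines_and_norms_agree {G : Type*} [Group G]
    (f : G → G → ℂ) (hf : L1norm f < ⊤)
    (TD : lp (fun _ : G × G => ℂ) 2 →L[ℂ] lp (fun _ : G × G => ℂ) 2)
    (hTD : ∀ (ξ : lp (fun _ : G × G => ℂ) 2) (x z : G),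
      TD ξ (x, z) = ∑' y : G, f (x * y) (y⁻¹ * z) * ξ (y⁻¹, z))
    (TR : lp (fun _ : G => ℂ) 2 →L[ℂ] lp (fun _ : G => ℂ) 2)
    (hTR : ∀ (c : lp (fun _ : G => ℂ) 2) (x : G),
      TR c x = ∑' y : G, f (x * y⁻¹) y * c y) :
    -- the intertwining relation λ^D(f) ∘ S = S ∘ R^ω(f), pointwise on functions
    (∀ (ξ : G × G → ℂ) (x z : G),
      (∑' y : G, f (x * y) (y⁻¹ * z) * ξ (y⁻¹ * z, z))
        = ∑' y : G, f y (y⁻¹ * (x * z)) * ξ (y⁻¹ * (x * z), z)) ∧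
    -- S is a bijective isometry of ℓ²(G × G)
    Function.Bijective (fun p : G × G => (p.1 * p.2, p.2)) ∧
    (∀ ξ : G × G → ℂ, ∑' p : G × G, ‖ξ (p.1 * p.2, p.2)‖ ^ 2 = ∑' p : G × G, ‖ξ p‖ ^ 2) ∧
    -- consequently the D-regular and canonical representations have equal norms
    ‖TD‖ = ‖TR‖ :=
  S_intertwines_and_norms_agree_general f TD hTD TR hTR
end
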